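/- For all nonnegative integers x and y with x ≠ y, and all x' < x, G*₋₁(x',y) ≠ G*₋₁(x,y); similarly for all y' < y, G*₋₁(x,y') ≠ G*₋₁(x,y). That is, the values of G*₋₁ are distinct along each row and each column of the table. -/
import Mathlib


/-- mex of a finite set of integers: least nonnegative integer not in the set
(negative elements are ignored). -/
noncomputable def mexZ (S : Finset ℤ) : ℤ := ((sInf {n : ℕ | (n : ℤ) ∉ S} : ℕ) : ℤ)

/-- `G*₋₁(x,y)`: `G*₋₁(0,0) = 0`, `G*₋₁(0,1) = G*₋₁(1,0) = -1`, and for `x + y > 1`,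
`G*₋₁(x,y) = mex({G*₋₁(x',y) : x' < x} ∪ {G*₋₁(x,y') : y' < y})`. -/
noncomputable def Gs : ℕ → ℕ → ℤ
  | x, y =>
    if x + y = 0 then 0 else if x + y = 1 then -1 else
    mexZ (((Finset.range x).attach.image fun x' => Gs x'.1 y) ∪
          ((Finset.range y).attach.image fun y' => Gs x y'.1))
termination_by x y => x + y
decreasing_by
  · have := x'.2; simp only [Finset.mem_range] at this; omega
  · have := y'.2; simp only [Finset.mem_range] at this; omega

lemma mexZ_not_mem (S : Finset ℤ) : mexZ S ∉ S := by
  have hfin : {n : ℕ | (n : ℤ) ∈ (S : Set ℤ)}.Finite :=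
    S.finite_toSet.preimage (fun a _ b _ h => by exact_mod_cast h)
  have hne : {n : ℕ | (n : ℤ) ∉ S}.Nonempty := by
    have : {n : ℕ | (n : ℤ) ∉ S} = {n : ℕ | (n : ℤ) ∈ (S : Set ℤ)}ᶜ := by
      ext n; simp
    rw [this]
    exact (hfin.infinite_compl).nonempty
  have := Nat.sInf_mem hne
  simpa [mexZ] using this

theorem Gs_row_col_injective (x y : ℕ) (hxy : x ≠ y) :
    (∀ x' < x, Gs x' y ≠ Gs x y) ∧ (∀ y' < y, Gs x y' ≠ Gs x y) := by
  rcases Nat.lt_or_ge (x + y) 2 with h | h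
  · have h00 : Gs 0 0 = 0 := by rw [Gs]; norm_num
    have h01 : Gs 0 1 = -1 := by rw [Gs]; norm_num
    have h10 : Gs 1 0 = -1 := by rw [Gs]; norm_num
    have hx : x ≤ 1 := by omega
    have hy : y ≤ 1 := by omega
    interval_cases x <;> interval_cases y <;> simp_all <;>
      · intro n hn; interval_cases n; omega
  · have hG : Gs x y = mexZ (((Finset.range x).attach.image fun x' => Gs x'.1 y) ∪
          ((Finset.range y).attach.image fun y' => Gs x y'.1)) := by
      rw [Gs]; rw [if_neg (by omega), if_neg (by omega)]
    constructor
    · intro x' hx' heq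
      apply mexZ_not_mem (((Finset.range x).attach.image fun x' => Gs x'.1 y) ∪
          ((Finset.range y).attach.image fun y' => Gs x y'.1))
      rw [← hG, ← heq]
      apply Finset.mem_union_left
      exact Finset.mem_image.2 ⟨⟨x', Finset.mem_range.2 hx'⟩, Finset.mem_attach _ _, rfl⟩
    · intro y' hy' heq
      apply mexZ_not_mem (((Finset.range x).attach.image fun x' => Gs x'.1 y) ∪
          ((Finset.range y).attach.image fun y' => Gs x y'.1))
      rw [← hG, ← heq]
      apply Finset.mem_union_right
      exact Finset.mem_image.2 ⟨⟨y', Finset.mem_range.2 hy'⟩, Finset.mem_attach _ _, rfl⟩
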